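/- arXiv:2210.15292 — 2 statements merged into one kernel-verified Lean document; each statement's English description precedes it below -/
import Mathlib

section
/- Under the assumptions that a > 1, b ≤ c, a ≥ (m+1)^d, d(θ*+nρ,θ*) ≥ c·n^{−d} for all n ≥ 1, and d(θ*+nρ,θ*) > b for n ∈ {1,…,m−1}: if θ ∈ 𝕋^D and n₁ < n₂ are natural numbers with θ + n₁ρ ∈ B_{r_j}(θ*) and θ + n₂ρ ∈ B_{r_j}(θ*), then n₂ − n₁ ≥ m in case j = 1, and n₂ − n₁ ≥ (m+1)^{j−1} in case j ≥ 2, where r_j = (b/2)·a^{−(j−1)}. -/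
/-!
Translation invariance turns two visits of the orbit `θ + nρ` to `B_{r_j}(θ*)` at times
`n₁ < n₂` into `d(θ* + kρ, θ*) < 2 r_j = b a^{-(j-1)}` with `k = n₂ - n₁`. For `j = 1` this
is `< b`, which the gap condition forbids for `1 ≤ k ≤ m - 1`. For `j ≥ 2` the Diophantine
bound and `b ≤ c` give `k^{-d} < a^{-(j-1)}`, i.e. `a^{j-1} < k^d`, and
`((m+1)^{j-1})^d ≤ a^{j-1}` then forces `(m+1)^{j-1} < k`.
-/

open Metric

section TranslationInvariant

variable {T : Type*} [MetricSpace T] [AddCommGroup T]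
  (hinv : ∀ x y z : T, dist (x + z) (y + z) = dist x y)
include hinv

lemma dist_add_self_eq_dist_zero (x v : T) : dist (x + v) x = dist v 0 := by
  simpa [add_comm] using hinv v 0 x

lemma dist_add_nsmul_add_nsmul {n₁ n₂ : ℕ} (h : n₁ ≤ n₂) (x y ρ : T) :
    dist (x + n₂ • ρ) (x + n₁ • ρ) = dist (y + (n₂ - n₁) • ρ) y := by
  have hshift : x + n₂ • ρ = (x + n₁ • ρ) + (n₂ - n₁) • ρ := by
    rw [add_assoc, ← add_nsmul, Nat.add_sub_cancel' h]
  rw [hshift, dist_add_self_eq_dist_zero hinv, dist_add_self_eq_dist_zero hinv]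

lemma dist_add_nsmul_lt_of_mem_ball {θstar ρ x : T} {r : ℝ} {n₁ n₂ : ℕ} (h : n₁ ≤ n₂)
    (h₁ : x + n₁ • ρ ∈ ball θstar r) (h₂ : x + n₂ • ρ ∈ ball θstar r) :
    dist (θstar + (n₂ - n₁) • ρ) θstar < 2 * r := by
  rw [← dist_add_nsmul_add_nsmul hinv h x]
  calc dist (x + n₂ • ρ) (x + n₁ • ρ)
      ≤ dist (x + n₂ • ρ) θstar + dist (x + n₁ • ρ) θstar := dist_triangle_right _ _ _
    _ < r + r := add_lt_add h₂ h₁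
    _ = 2 * r := by ring

end TranslationInvariant

lemma pow_lt_of_rpow_neg_lt_rpow_neg {q a k d : ℝ} (n : ℕ) (hq : 0 ≤ q) (ha : 0 < a)
    (hk : 0 < k) (hd : 0 < d) (hqa : q ^ d ≤ a) (h : k ^ (-d) < a ^ (-(n : ℝ))) :
    q ^ n < k := by
  rw [Real.rpow_neg hk.le, Real.rpow_neg ha.le, Real.rpow_natCast,
    inv_lt_inv₀ (Real.rpow_pos_of_pos hk d) (pow_pos ha n)] at h
  have hpow : (q ^ n) ^ d < k ^ d :=
    calc (q ^ n) ^ d = (q ^ d) ^ n := by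
          rw [← Real.rpow_natCast, ← Real.rpow_natCast, ← Real.rpow_mul hq, ← Real.rpow_mul hq,
            mul_comm]
      _ ≤ a ^ n := pow_le_pow_left₀ (Real.rpow_nonneg hq d) hqa n
      _ < k ^ d := h
  exact (Real.rpow_lt_rpow_iff (pow_nonneg hq n) hk.le hd).mp hpow

theorem stmt2_general {T : Type*} [MetricSpace T] [AddCommGroup T]
    (hdist_inv : ∀ x y z : T, dist (x + z) (y + z) = dist x y)
    (a b c d : ℝ) (m : ℕ) (θstar ρ : T)
    (ha : 1 < a) (hb0 : 0 < b) (hd : 1 < d)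
    (hbc : b ≤ c) (ham : ((m : ℝ) + 1) ^ d ≤ a)
    (hdio : ∀ n : ℕ, 1 ≤ n → c * (n : ℝ) ^ (-d) ≤ dist (θstar + n • ρ) θstar)
    (hgap : ∀ n : ℕ, 1 ≤ n → n ≤ m - 1 → b < dist (θstar + n • ρ) θstar)
    (θ : T) (j n₁ n₂ : ℕ) (h12 : n₁ < n₂)
    (h1 : θ + n₁ • ρ ∈ Metric.ball θstar (b / 2 * a ^ (-((j : ℝ) - 1))))
    (h2 : θ + n₂ • ρ ∈ Metric.ball θstar (b / 2 * a ^ (-((j : ℝ) - 1)))) :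
    (j = 1 → m ≤ n₂ - n₁) ∧ (2 ≤ j → (m + 1) ^ (j - 1) ≤ n₂ - n₁) := by
  have hk : 1 ≤ n₂ - n₁ := by omega
  have hreturn : dist (θstar + (n₂ - n₁) • ρ) θstar < b * a ^ (-((j : ℝ) - 1)) := by
    convert dist_add_nsmul_lt_of_mem_ball hdist_inv h12.le h1 h2 using 1
    ring
  refine ⟨fun hj => ?_, fun hj => ?_⟩
  · subst hj
    by_contra! hlt
    have := hgap _ hk (by omega)
    simp only [Nat.cast_one, sub_self, neg_zero, Real.rpow_zero, mul_one] at hreturn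
    linarith
  · have hkd : ((n₂ - n₁ : ℕ) : ℝ) ^ (-d) < a ^ (-((j - 1 : ℕ) : ℝ)) := by
      rw [Nat.cast_sub (by omega : 1 ≤ j), Nat.cast_one]
      refine lt_of_mul_lt_mul_left ?_ hb0.le
      calc b * ((n₂ - n₁ : ℕ) : ℝ) ^ (-d)
          ≤ c * ((n₂ - n₁ : ℕ) : ℝ) ^ (-d) := by gcongr
        _ < b * a ^ (-((j : ℝ) - 1)) := (hdio _ hk).trans_lt hreturn
    have := pow_lt_of_rpow_neg_lt_rpow_neg (j - 1) (by positivity) (by linarith)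
      (by exact_mod_cast hk) (by linarith) ham hkd
    exact_mod_cast this.le

/-- If θ+n₁ρ and θ+n₂ρ both lie in B_{r_j}(θ*) with n₁ < n₂, then
n₂-n₁ ≥ m if j = 1 and n₂-n₁ ≥ (m+1)^{j-1} if j ≥ 2. -/
theorem stmt2 {T : Type*} [MetricSpace T] [AddCommGroup T]
    (hdist_inv : ∀ x y z : T, dist (x + z) (y + z) = dist x y)
    (a b c d : ℝ) (m : ℕ) (θstar ρ : T)
    (ha : 1 < a) (hb0 : 0 < b) (hb1 : b < 1) (hc : 0 < c) (hd : 1 < d)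
    (hbc : b ≤ c) (ham : ((m : ℝ) + 1) ^ d ≤ a)
    (hdio : ∀ n : ℕ, 1 ≤ n → c * (n : ℝ) ^ (-d) ≤ dist (θstar + n • ρ) θstar)
    (hgap : ∀ n : ℕ, 1 ≤ n → n ≤ m - 1 → b < dist (θstar + n • ρ) θstar)
    (θ : T) (j n₁ n₂ : ℕ) (hj : 1 ≤ j) (h12 : n₁ < n₂)
    (h1 : θ + n₁ • ρ ∈ Metric.ball θstar (b / 2 * a ^ (-((j : ℝ) - 1))))
    (h2 : θ + n₂ • ρ ∈ Metric.ball θstar (b / 2 * a ^ (-((j : ℝ) - 1)))) :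
    (j = 1 → m ≤ n₂ - n₁) ∧ (2 ≤ j → (m + 1) ^ (j - 1) ≤ n₂ - n₁) :=
  stmt2_general hdist_inv a b c d m θstar ρ ha hb0 hd hbc ham hdio hgap θ j n₁ n₂ h12 h1 h2
end

section
/- Let m ≥ 2 be a natural number and a > 1 a real number. If visits of an orbit θ + ℓρ (ℓ = 1,…,N) to the sets B_{r_j}(θ*)\B_{r_{j+1}}(θ*) occur with the gap constraints that at most ⌊N/m⌋ indices ℓ land in B_{r_1}(θ*) and at most ⌊N/(m+1)^{j−1}⌋ indices land in B_{r_j}(θ*) for each j ≥ 2, and if a function h: 𝕋^D → ℝ satisfies h(θ') ≥ (1−j)·log a whenever θ' ∈ B_{r_j}(θ*)\B_{r_{j+1}}(θ*) (with B_{r_0}(θ*) = 𝕋^D), and if m > 22, then (1/N)·∑_{ℓ=1}^N h(θ + ℓρ) ≥ (1/2)·log a. -/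
open scoped Classical

/-!
Let `d ℓ` be the index of the annulus `B_{r_d}(θ*) \ B_{r_{d+1}}(θ*)` containing `θ + ℓρ`, so that
`h (θ + ℓρ) ≥ (1 - d ℓ) log a`. As the balls are nested,
`∑ ℓ, d ℓ = ∑_{j ≥ 1} #{ℓ | θ + ℓρ ∈ B_{r_j}(θ*)}` (layer-cake), and for `m ≥ 7` the counting
hypotheses bound the `j`-th term by `N / 2^(j+1)`. Hence `∑ ℓ, d ℓ ≤ N / 2` and the average of `h`
is at least `(1 - 1/2) log a`.
-/

open Finset

theorem Finset.sum_eq_sum_range_card_filter_lt {ι : Type*} (s : Finset ι) (f : ι → ℕ) {K : ℕ}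
    (hf : ∀ i ∈ s, f i ≤ K) :
    ∑ i ∈ s, f i = ∑ j ∈ range K, #{i ∈ s | j < f i} := by
  calc ∑ i ∈ s, f i = ∑ i ∈ s, #{j ∈ range K | j < f i} := by
        refine sum_congr rfl fun i hi => ?_
        conv_lhs => rw [← card_range (f i)]
        congr 1
        ext j
        simp only [mem_range, mem_filter]
        have := hf i hi
        omega
    _ = _ := by simp_rw [card_filter]; exact sum_comm

section Depth

variable {T : Type*} (U : ℕ → Set T) (K : ℕ)

/-- For a chain `U 0 = univ ⊇ U 1 ⊇ ⋯` this is the index of the shell `U j \ U (j + 1)` containing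
`x`, provided `x ∉ U (K + 1)`. -/
noncomputable def depth (x : T) : ℕ := Nat.findGreatest (x ∈ U ·) K

variable {U K}

theorem depth_le (x : T) : depth U K x ≤ K := Nat.findGreatest_le K

theorem mem_sdiff_of_depth {x : T} (h0 : x ∈ U 0) (hK : x ∉ U (K + 1)) :
    x ∈ U (depth U K x) \ U (depth U K x + 1) := by
  refine ⟨Nat.findGreatest_spec (P := (x ∈ U ·)) K.zero_le h0, ?_⟩
  rcases (depth_le (U := U) x).lt_or_eq with hlt | heq
  · exact Nat.findGreatest_is_greatest (Nat.lt_succ_self _) hlt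
  · rwa [heq]

theorem lt_depth_iff (hU : Antitone U) {x : T} {j : ℕ} (hj : j < K) :
    j < depth U K x ↔ x ∈ U (j + 1) :=
  ⟨fun h => hU h (Nat.findGreatest_of_ne_zero rfl (Nat.ne_zero_of_lt h)),
    Nat.le_findGreatest (P := (x ∈ U ·)) hj⟩

theorem sum_depth_eq {ι : Type*} (hU : Antitone U) (s : Finset ι) (x : ι → T) :
    ∑ i ∈ s, depth U K (x i) = ∑ j ∈ range K, #{i ∈ s | x i ∈ U (j + 1)} := by
  rw [sum_eq_sum_range_card_filter_lt s _ fun i _ => depth_le (x i)]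
  refine sum_congr rfl fun j hj => ?_
  simp_rw [lt_depth_iff hU (mem_range.mp hj)]

end Depth

theorem antitone_ball_of_succ_le {T : Type*} [PseudoMetricSpace T] {c : T} {r : ℕ → ℝ}
    (hr0 : Metric.ball c (r 0) = Set.univ) (hr : ∀ n, 1 ≤ n → r (n + 1) ≤ r n) :
    Antitone fun n => Metric.ball c (r n) := by
  refine antitone_nat_of_succ_le fun n => ?_
  rcases n with _ | n
  · simp only [hr0, Set.subset_univ]
  · exact Metric.ball_subset_ball (hr _ (Nat.le_add_left 1 n))

theorem two_pow_add_three_le_succ_pow {m : ℕ} (hm : 7 ≤ m) (i : ℕ) :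
    2 ^ (i + 3) ≤ (m + 1) ^ (i + 1) :=
  calc 2 ^ (i + 3) ≤ 2 ^ (3 * (i + 1)) := Nat.pow_le_pow_right two_pos (by omega)
    _ = 8 ^ (i + 1) := by rw [pow_mul]; norm_num
    _ ≤ (m + 1) ^ (i + 1) := Nat.pow_le_pow_left (by omega) _

theorem sum_range_le_half_of_le_div_two_pow {N : ℕ} (c : ℕ → ℕ) (hc : ∀ j, c j ≤ N / 2 ^ (j + 2))
    (K : ℕ) :
    ∑ j ∈ range K, (c j : ℝ) ≤ N / 2 :=
  calc ∑ j ∈ range K, (c j : ℝ) ≤ ∑ j ∈ range K, (N / 4 : ℝ) * (1 / 2) ^ j := by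
        refine sum_le_sum fun j _ => ?_
        calc (c j : ℝ) ≤ ((N / 2 ^ (j + 2) : ℕ) : ℝ) := by exact_mod_cast hc j
          _ ≤ N / 2 ^ (j + 2) := by exact_mod_cast Nat.cast_div_le
          _ = (N / 4 : ℝ) * (1 / 2) ^ j := by rw [pow_add, one_div, inv_pow]; ring
    _ = (N / 4 : ℝ) * ∑ j ∈ range K, (1 / 2 : ℝ) ^ j := (mul_sum ..).symm
    _ ≤ (N / 4 : ℝ) * 2 := by gcongr; exact sum_geometric_two_le K
    _ = N / 2 := by ring

theorem half_mul_le_average_of_sum_le {ι : Type*} {s : Finset ι} (hs : s.Nonempty) {L : ℝ}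
    (hL : 0 ≤ L) {d g : ι → ℝ} (hd : ∑ i ∈ s, d i ≤ #s / 2) (hg : ∀ i ∈ s, (1 - d i) * L ≤ g i) :
    1 / 2 * L ≤ 1 / #s * ∑ i ∈ s, g i := by
  have hsum : (#s / 2 : ℝ) * L ≤ ∑ i ∈ s, g i :=
    calc (#s / 2 : ℝ) * L ≤ (#s - ∑ i ∈ s, d i) * L := by gcongr; linarith
      _ = ∑ i ∈ s, (1 - d i) * L := by rw [← sum_mul, sum_sub_distrib]; simp
      _ ≤ _ := sum_le_sum hg
  have hcard : (0 : ℝ) < #s := by exact_mod_cast hs.card_pos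
  calc 1 / 2 * L = 1 / #s * (#s / 2 * L) := by field_simp
    _ ≤ _ := mul_le_mul_of_nonneg_left hsum (by positivity)

theorem stmt3_general {T : Type*} [MetricSpace T] [AddCommGroup T]
    (a b : ℝ) (m N : ℕ) (θstar ρ θ : T) (r : ℕ → ℝ) (h : T → ℝ)
    (ha : 1 < a) (hb0 : 0 < b) (hm : 22 < m) (hN : 1 ≤ N)
    (hr0 : Metric.ball θstar (r 0) = Set.univ)
    (hrj : ∀ j : ℕ, 1 ≤ j → r j = b / 2 * a ^ (-((j : ℝ) - 1)))
    (hcount1 :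
      ((Finset.Icc 1 N).filter (fun ℓ => θ + ℓ • ρ ∈ Metric.ball θstar (r 1))).card ≤ N / m)
    (hcountj : ∀ j : ℕ, 2 ≤ j →
      ((Finset.Icc 1 N).filter (fun ℓ => θ + ℓ • ρ ∈ Metric.ball θstar (r j))).card ≤
        N / (m + 1) ^ (j - 1))
    (hh : ∀ j : ℕ, ∀ θ' : T, θ' ∈ Metric.ball θstar (r j) \ Metric.ball θstar (r (j + 1)) →
      (1 - (j : ℝ)) * Real.log a ≤ h θ') :
    (1 / 2) * Real.log a ≤ (1 / (N : ℝ)) * ∑ ℓ ∈ Finset.Icc 1 N, h (θ + ℓ • ρ) := by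
  set U : ℕ → Set T := fun j => Metric.ball θstar (r j)
  set x : ℕ → T := fun ℓ => θ + ℓ • ρ
  have hU : Antitone U := antitone_ball_of_succ_le hr0 fun n hn => by
    rw [hrj n hn, hrj (n + 1) (by omega)]
    gcongr
    · exact ha.le
    · linarith
  have hvisits : ∀ j, #{ℓ ∈ Icc 1 N | x ℓ ∈ U (j + 1)} ≤ N / 2 ^ (j + 2) := by
    rintro (_ | i)
    · exact hcount1.trans (Nat.div_le_div_left (by omega) (by norm_num))
    · exact (hcountj (i + 2) (by omega)).trans
        (Nat.div_le_div_left (two_pow_add_three_le_succ_pow (by omega) i) (by positivity))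
  have hescape : ∀ ℓ ∈ Icc 1 N, x ℓ ∉ U (N + 1) := by
    have hN2 : N < 2 ^ (N + 2) :=
      Nat.lt_two_pow_self.trans (Nat.pow_lt_pow_right one_lt_two (by omega))
    simpa [Nat.div_eq_of_lt hN2, filter_eq_empty_iff] using hvisits N
  have hdepth : ∑ ℓ ∈ Icc 1 N, (depth U N (x ℓ) : ℝ) ≤ N / 2 := by
    rw [← Nat.cast_sum, sum_depth_eq hU, Nat.cast_sum]
    exact sum_range_le_half_of_le_div_two_pow _ hvisits N
  have hlower : ∀ ℓ ∈ Icc 1 N, (1 - (depth U N (x ℓ) : ℝ)) * Real.log a ≤ h (x ℓ) :=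
    fun ℓ hℓ => hh _ _ (mem_sdiff_of_depth (by simp [U, hr0]) (hescape ℓ hℓ))
  have hcard : (#(Icc 1 N) : ℝ) = N := by simp
  simpa [hcard] using half_mul_le_average_of_sum_le ⟨1, by simpa using hN⟩ (Real.log_pos ha).le
    (hcard ▸ hdepth) hlower

/-- Under the stated gap (counting) constraints on visits to the
balls B_{r_j}(θ*) and the lower bound h(θ') ≥ (1-j)·log a on the annuli,
the Birkhoff-type average of h along the orbit is at least (1/2)·log a. -/
theorem stmt3 {T : Type*} [MetricSpace T] [AddCommGroup T]
    (a b : ℝ) (m N : ℕ) (θstar ρ θ : T) (r : ℕ → ℝ) (h : T → ℝ)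
    (ha : 1 < a) (hb0 : 0 < b) (hb1 : b < 1) (hm : 22 < m) (hN : 1 ≤ N)
    (hr0 : Metric.ball θstar (r 0) = Set.univ)
    (hrj : ∀ j : ℕ, 1 ≤ j → r j = b / 2 * a ^ (-((j : ℝ) - 1)))
    (hcount1 :
      ((Finset.Icc 1 N).filter (fun ℓ => θ + ℓ • ρ ∈ Metric.ball θstar (r 1))).card ≤ N / m)
    (hcountj : ∀ j : ℕ, 2 ≤ j →
      ((Finset.Icc 1 N).filter (fun ℓ => θ + ℓ • ρ ∈ Metric.ball θstar (r j))).card ≤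
        N / (m + 1) ^ (j - 1))
    (hh : ∀ j : ℕ, ∀ θ' : T, θ' ∈ Metric.ball θstar (r j) \ Metric.ball θstar (r (j + 1)) →
      (1 - (j : ℝ)) * Real.log a ≤ h θ') :
    (1 / 2) * Real.log a ≤ (1 / (N : ℝ)) * ∑ ℓ ∈ Finset.Icc 1 N, h (θ + ℓ • ρ) :=
  stmt3_general a b m N θstar ρ θ r h ha hb0 hm hN hr0 hrj hcount1 hcountj hh
end
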